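/- Let F be a finite field with q elements, let g be a generator of the cyclic group F^×, and let n ≥ 2 be a natural number. Then x^n − g is irreducible over F if and only if every prime divisor of n divides q − 1 and, in case 4 divides n, also 4 divides q − 1. -/

import Mathlib

/-!
A prime `p` with `p ∣ q - 1` kills the surjectivity of `x ↦ x ^ p` on the cyclic group `Fˣ`, so
the generator `g` is a `p`-th power exactly when `p ∤ q - 1`.

Over any field, `X ^ n - a` is irreducible as soon as `a` is not a `p`-th power for the primes
`p ∣ n` and `-1` is a square when `4 ∣ n`. Induct on `n = p * m`: adjoin a root `z` of
`X ^ p - a`; if `z = b ^ r` then taking norms gives `(-1) ^ p * -a = N(b) ^ r`, which makes `a` an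
`r`-th power (for `p = r = 2` through a square root of `-1`).

Conversely, if `4 ∣ n` but `q ≡ 3 [MOD 4]`, then `-1` and `g` are non-squares, so `-g / 4` is a
square and hence a fourth power `c ^ 4`, and `X ^ (4 * k) + 4 * c ^ 4` factors by the
Sophie Germain identity.
-/

open Polynomial IntermediateField

theorem exists_pow_eq_iff_not_dvd_card_of_forall_mem_zpowers {G : Type*} [Group G] [Finite G]
    {g : G} (hg : ∀ x, x ∈ Subgroup.zpowers g) {p : ℕ} (hp : p.Prime) :
    (∃ b, b ^ p = g) ↔ ¬p ∣ Nat.card G := by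
  constructor
  · rintro ⟨b, rfl⟩ hpG
    have : Fact p.Prime := ⟨hp⟩
    obtain ⟨x, hx⟩ := exists_prime_orderOf_dvd_card' p hpG
    have hsurj : Function.Surjective fun y : G ↦ y ^ p := fun y ↦ by
      obtain ⟨k, rfl⟩ := Subgroup.mem_zpowers_iff.mp (hg y)
      exact ⟨b ^ k, by simp only [← zpow_natCast, ← zpow_mul, mul_comm]⟩
    have hx1 : x = 1 := Finite.injective_iff_surjective.mpr hsurj <| by
      simp only [← hx, pow_orderOf_eq_one, one_pow]
    exact hp.one_lt.ne' (by rw [← hx, hx1, orderOf_one])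
  · intro hpG
    exact (powCoprime (hp.coprime_iff_not_dvd.mpr hpG).symm).surjective g

namespace FiniteField

variable {F : Type*} [Field F] [Fintype F]

theorem exists_pow_eq_iff_not_dvd_card_sub_one_of_forall_mem_zpowers {g : Fˣ}
    (hg : ∀ x, x ∈ Subgroup.zpowers g) {p : ℕ} (hp : p.Prime) :
    (∃ b : F, b ^ p = g) ↔ ¬p ∣ Fintype.card F - 1 := by
  rw [← Nat.card_eq_fintype_card, ← Nat.card_units,
    ← exists_pow_eq_iff_not_dvd_card_of_forall_mem_zpowers hg hp]
  constructor
  · rintro ⟨b, hb⟩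
    have hb0 : b ≠ 0 := by
      rintro rfl
      exact g.ne_zero (by rw [← hb, zero_pow hp.ne_zero])
    exact ⟨Units.mk0 b hb0, Units.ext (by simpa using hb)⟩
  · rintro ⟨b, rfl⟩
    exact ⟨b, by simp⟩

theorem isSquare_neg_of_not_isSquare (h : ¬IsSquare (-1 : F)) {a : F} (ha : ¬IsSquare a) :
    IsSquare (-a) := by
  classical
  have ha0 : -a ≠ 0 := neg_ne_zero.mpr fun h0 ↦ ha (h0 ▸ IsSquare.zero)
  rw [← quadraticChar_one_iff_isSquare ha0, neg_eq_neg_one_mul, map_mul,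
    quadraticChar_neg_one_iff_not_isSquare.mpr h, quadraticChar_neg_one_iff_not_isSquare.mpr ha]
  norm_num

theorem exists_pow_four_eq_of_isSquare (h : ¬IsSquare (-1 : F)) {a : F} (ha : IsSquare a) :
    ∃ c, c ^ 4 = a := by
  obtain ⟨b, rfl⟩ := ha
  by_cases hb : IsSquare b
  · obtain ⟨c, rfl⟩ := hb
    exact ⟨c, by ring⟩
  · obtain ⟨c, hc⟩ := isSquare_neg_of_not_isSquare h hb
    exact ⟨c, by linear_combination (b - c * c) * hc⟩

theorem exists_eq_neg_four_mul_pow_four (h : ¬IsSquare (-1 : F)) {a : F} (ha : ¬IsSquare a) :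
    ∃ c, a = -4 * c ^ 4 := by
  have h2 : (2 : F) ≠ 0 := fun h2 ↦ h ⟨1, by linear_combination -h2⟩
  have h4 : (4 : F) ≠ 0 := (by norm_num : (2 : F) * 2 = 4) ▸ mul_ne_zero h2 h2
  obtain ⟨b, hb⟩ := isSquare_neg_of_not_isSquare h ha
  obtain ⟨c, hc⟩ := exists_pow_four_eq_of_isSquare h (a := -a / 4) ⟨b / 2, by
    rw [div_mul_div_comm, ← hb]
    norm_num⟩
  exact ⟨c, by rw [hc]; field_simp⟩

end FiniteField

theorem not_irreducible_X_pow_sub_C_neg_four_mul_pow_four {R : Type*} [CommRing R] [IsDomain R]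
    {n : ℕ} (hn : n ≠ 0) (h4 : 4 ∣ n) (c : R) : ¬Irreducible (X ^ n - C (-4 * c ^ 4)) := by
  obtain ⟨k, rfl⟩ := h4
  have hk : 0 < k := by omega
  have hfactor : (X ^ (4 * k) - C (-4 * c ^ 4) : R[X]) =
      trinomial 0 k (2 * k) (2 * c ^ 2) (-(2 * c)) 1 *
        trinomial 0 k (2 * k) (2 * c ^ 2) (2 * c) 1 := by
    simp only [trinomial, map_neg, map_mul, map_pow, map_ofNat, map_one]
    ring
  intro hirr
  rcases hirr.isUnit_or_isUnit hfactor with hunit | hunit <;>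
  · have := natDegree_eq_zero_of_isUnit hunit
    rw [trinomial_natDegree hk (by omega) one_ne_zero] at this
    omega

theorem exists_pow_eq_of_neg_eq_pow {R : Type*} [CommRing R] {a c : R} {r : ℕ} (hr : r.Prime)
    (h2 : r = 2 → IsSquare (-1 : R)) (h : -a = c ^ r) : ∃ b, b ^ r = a := by
  rcases hr.eq_two_or_odd' with rfl | hodd
  · obtain ⟨i, hi⟩ := h2 rfl
    exact ⟨i * c, by linear_combination h - c ^ 2 * hi⟩
  · exact ⟨-c, by rw [hodd.neg_pow, ← h, neg_neg]⟩

theorem norm_adjoinSimple_gen_of_minpoly_eq_X_pow_sub_C {K L : Type*} [Field K] [Field L]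
    [Algebra K L] {x : L} {p : ℕ} (hp : p ≠ 0) {a : K} (hx : minpoly K x = X ^ p - C a) :
    Algebra.norm K (AdjoinSimple.gen K x) = (-1) ^ p * -a := by
  have hint : IsIntegral K x := by
    by_contra h
    exact X_pow_sub_C_ne_zero (Nat.pos_of_ne_zero hp) a (hx ▸ minpoly.eq_zero h)
  rw [← adjoin.powerBasis_gen hint, Algebra.PowerBasis.norm_gen_eq_coeff_zero_minpoly]
  simp [minpoly_gen, hx, hp.symm]

universe u

theorem X_pow_sub_C_irreducible_of_forall_prime {K : Type u} [Field K] {n : ℕ} (hn : n ≠ 0)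
    {a : K} (h4 : 4 ∣ n → IsSquare (-1 : K))
    (ha : ∀ p : ℕ, p.Prime → p ∣ n → ∀ b : K, b ^ p ≠ a) :
    Irreducible (X ^ n - C a) := by
  induction n using induction_on_primes generalizing K a with
  | zero => exact absurd rfl hn
  | one => simpa using irreducible_X_sub_C a
  | prime_mul p m hp IH =>
    rw [mul_comm]
    apply X_pow_mul_sub_C_irreducible
      (X_pow_sub_C_irreducible_of_prime hp (ha p hp (dvd_mul_right p m)))
    intro E _ _ x hx
    refine IH (right_ne_zero_of_mul hn)
      (fun h ↦ by simpa using (h4 (dvd_mul_of_dvd_right h p)).map (algebraMap K K⟮x⟯)) ?_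
    intro r hr hrm b hb
    have hnorm : (-1) ^ p * -a = Algebra.norm K b ^ r := by
      rw [← map_pow, hb, norm_adjoinSimple_gen_of_minpoly_eq_X_pow_sub_C hp.ne_zero hx]
    obtain ⟨c, hc⟩ : ∃ c, c ^ r = a := by
      rcases hp.eq_two_or_odd' with rfl | hodd
      · refine exists_pow_eq_of_neg_eq_pow hr (fun hr2 ↦ h4 ?_) (by simpa using hnorm)
        subst hr2
        exact mul_dvd_mul_left 2 hrm
      · exact ⟨_, by simpa [hodd.neg_one_pow] using hnorm.symm⟩
    exact ha r hr (dvd_mul_of_dvd_right hrm p) c hc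

/-- For a finite field `F` with `q` elements, a generator `g` of the cyclic
group `Fˣ`, and `n ≥ 2`: the binomial `x^n - g` is irreducible over `F` iff
every prime divisor of `n` divides `q - 1`, and `4 ∣ n → 4 ∣ q - 1`. -/
theorem binomial_generator_irreducible_iff {F : Type*} [Field F] [Fintype F]
    (q : ℕ) (hq : Fintype.card F = q) (g : Fˣ)
    (hg : ∀ x : Fˣ, x ∈ Subgroup.zpowers g)
    (n : ℕ) (hn : 2 ≤ n) :
    Irreducible ((X : F[X]) ^ n - C (g : F)) ↔
      (∀ p : ℕ, p.Prime → p ∣ n → p ∣ q - 1) ∧ (4 ∣ n → 4 ∣ q - 1) := by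
  subst hq
  have hroot (p : ℕ) (hp : p.Prime) : (∀ b : F, b ^ p ≠ g) ↔ p ∣ Fintype.card F - 1 := by
    simpa using
      (FiniteField.exists_pow_eq_iff_not_dvd_card_sub_one_of_forall_mem_zpowers hg hp).not
  have hcard : 1 < Fintype.card F := Fintype.one_lt_card
  constructor
  · intro hirr
    have hdvd (p : ℕ) (hp : p.Prime) (hpn : p ∣ n) : p ∣ Fintype.card F - 1 :=
      (hroot p hp).mp (pow_ne_of_irreducible_X_pow_sub_C hirr hpn hp.ne_one)
    refine ⟨hdvd, fun h4n ↦ by_contra fun h4q ↦ ?_⟩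
    have h2 := hdvd 2 Nat.prime_two (dvd_trans (by norm_num) h4n)
    have hneg : ¬IsSquare (-1 : F) := by
      rw [FiniteField.isSquare_neg_one_iff, not_not]
      omega
    have hg2 : ¬IsSquare (g : F) := fun ⟨b, hb⟩ ↦
      (hroot 2 Nat.prime_two).mpr h2 b (by rw [hb, sq])
    obtain ⟨c, hc⟩ := FiniteField.exists_eq_neg_four_mul_pow_four hneg hg2
    exact not_irreducible_X_pow_sub_C_neg_four_mul_pow_four (by omega) h4n c (hc ▸ hirr)
  · rintro ⟨hdvd, h4⟩
    refine X_pow_sub_C_irreducible_of_forall_prime (by omega) (fun h4n ↦ ?_)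
      (fun p hp hpn ↦ (hroot p hp).mpr (hdvd p hp hpn))
    have := h4 h4n
    rw [FiniteField.isSquare_neg_one_iff]
    omega
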